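/- Let N ≥ 1, m ∈ ℝ, c ∈ (0,1), and let Γ, Γ′ ⊆ ℝ^N ∖ {0} be open cones such that η ∈ Γ whenever ξ ∈ Γ′, η ∈ ℝ^N and |ξ − η| ≤ c|ξ|. Let F : ℤ^N × ℤ^N → ℂ satisfy symbol-type bounds of order m, and let g : ℤ^N → ℂ be rapidly decreasing on Γ ∩ ℤ^N. Then for every k ∈ ℕ there exists C′_k > 0 such that Σ_{η ∈ ℤ^N, |η| < c|ξ|} |F(η, ξ−η)| · |g(ξ−η)| ≤ C′_k (1+|ξ|)^(−k) for every ξ ∈ Γ′ ∩ ℤ^N. -/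

import Mathlib

/-- Inclusion of `ℤᴺ` into `ℝᴺ` with the Euclidean norm. -/
noncomputable def iZ (N : ℕ) (ξ : Fin N → ℤ) : EuclideanSpace ℝ (Fin N) :=
  WithLp.toLp 2 (fun i => (ξ i : ℝ))

/-- An open cone in `ℝᴺ ∖ {0}`. -/
def IsOpenCone (N : ℕ) (Γ : Set (EuclideanSpace ℝ (Fin N))) : Prop :=
  IsOpen Γ ∧ (0 : EuclideanSpace ℝ (Fin N)) ∉ Γ ∧
    ∀ ξ ∈ Γ, ∀ l : ℝ, 0 < l → l • ξ ∈ Γ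

/-- `F` satisfies symbol-type bounds of order `m`. -/
def SymbolBounds (N : ℕ) (m : ℝ) (F : (Fin N → ℤ) → (Fin N → ℤ) → ℂ) : Prop :=
  ∀ k : ℕ, ∃ D > (0 : ℝ), ∀ η ζ : Fin N → ℤ,
    ‖F η ζ‖ ≤ D * ((1 + ‖iZ N η‖) ^ k)⁻¹ * (1 + ‖iZ N ζ‖) ^ m

/-- `g` is rapidly decreasing on `Γ ∩ ℤᴺ`. -/
def RapidlyDecreasingOn (N : ℕ) (g : (Fin N → ℤ) → ℂ)
    (Γ : Set (EuclideanSpace ℝ (Fin N))) : Prop :=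
  ∀ k : ℕ, ∃ C > (0 : ℝ), ∀ ζ : Fin N → ℤ, iZ N ζ ∈ Γ →
    ‖g ζ‖ ≤ C * ((1 + ‖iZ N ζ‖) ^ k)⁻¹

/-!
For `|η| < c|ξ|` with `ξ ∈ Γ'`, the point `ξ - η` lies in `Γ` and `1 + |ξ - η| ≥ (1 - c)(1 + |ξ|)`.
Hence the decay of `g` in `ξ - η` of order `⌈m⌉ + k` absorbs the growth `(1 + |ξ - η|)^m` of `F` and
leaves `((1 - c)(1 + |ξ|))^(-k)`, while the decay of `F` in `η` of order `2N` makes the remaining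
sum over `η ∈ ℤᴺ` converge: `(1 + |η|)^(-2N)` is dominated by `∏ᵢ (1 + |ηᵢ|)^(-2)`.
-/

lemma summable_fin_prod_of_nonneg {α : Type*} {f : α → ℝ} (hf0 : 0 ≤ f) (hf : Summable f) :
    ∀ n : ℕ, Summable (fun x : Fin n → α => ∏ i, f (x i))
  | 0 => .of_finite
  | n + 1 => by
    rw [← (Fin.consEquiv fun _ => α).summable_iff]
    refine (hf.mul_of_nonneg (summable_fin_prod_of_nonneg hf0 hf n) hf0
      fun x => Finset.prod_nonneg fun i _ => hf0 _).congr ?_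
    rintro ⟨a, x⟩
    simp [Fin.consEquiv, Fin.prod_univ_succ]

lemma summable_inv_one_add_abs_sq : Summable (fun n : ℤ => ((1 + |(n : ℝ)|) ^ 2)⁻¹) := by
  have h : Summable (fun n : ℕ => ((1 + (n : ℝ)) ^ 2)⁻¹) := by
    simpa [add_comm] using (summable_nat_add_iff 1).mpr (Real.summable_nat_pow_inv.mpr one_lt_two)
  exact .of_nat_of_neg (by simpa using h) (by simpa using h)

lemma iZ_sub {N : ℕ} (a b : Fin N → ℤ) : iZ N (a - b) = iZ N a - iZ N b := by
  ext i; simp [iZ]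

lemma abs_apply_le_norm_iZ {N : ℕ} (η : Fin N → ℤ) (i : Fin N) : |(η i : ℝ)| ≤ ‖iZ N η‖ := by
  simpa [iZ] using PiLp.norm_apply_le (iZ N η) i

lemma summable_inv_one_add_norm_iZ_pow (N : ℕ) :
    Summable (fun η : Fin N → ℤ => ((1 + ‖iZ N η‖) ^ (2 * N))⁻¹) := by
  refine (summable_fin_prod_of_nonneg (fun _ => by positivity) summable_inv_one_add_abs_sq
    N).of_nonneg_of_le (fun _ => by positivity) fun η => ?_
  calc ((1 + ‖iZ N η‖) ^ (2 * N))⁻¹ = ∏ _i : Fin N, ((1 + ‖iZ N η‖) ^ 2)⁻¹ := by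
        simp [Finset.prod_const, pow_mul]
    _ ≤ ∏ i, ((1 + |(η i : ℝ)|) ^ 2)⁻¹ :=
        Finset.prod_le_prod (fun _ _ => by positivity) fun i _ => by
          gcongr; exact abs_apply_le_norm_iZ η i

lemma one_sub_mul_one_add_norm_le {E : Type*} [SeminormedAddCommGroup E] {c : ℝ} (hc : 0 ≤ c)
    {x y : E} (h : ‖y‖ ≤ c * ‖x‖) : (1 - c) * (1 + ‖x‖) ≤ 1 + ‖x - y‖ := by
  have := norm_sub_norm_le x y
  nlinarith

lemma rpow_mul_inv_pow_ceil_add_le {B : ℝ} (hB : 1 ≤ B) (m : ℝ) (k : ℕ) :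
    B ^ m * (B ^ (⌈m⌉₊ + k))⁻¹ ≤ (B ^ k)⁻¹ := by
  have hm : B ^ m ≤ B ^ ⌈m⌉₊ := by
    simpa using Real.rpow_le_rpow_of_exponent_le hB (Nat.le_ceil m)
  calc B ^ m * (B ^ (⌈m⌉₊ + k))⁻¹ ≤ B ^ ⌈m⌉₊ * (B ^ (⌈m⌉₊ + k))⁻¹ := by gcongr
    _ = (B ^ k)⁻¹ := by
        rw [pow_add, mul_inv, ← mul_assoc, mul_inv_cancel₀ (by positivity), one_mul]

lemma summable_and_tsum_le_of_le_mul {ι : Type*} {f w : ι → ℝ} {M : ℝ} (hf : 0 ≤ f)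
    (hw : Summable w) (hfw : ∀ i, f i ≤ M * w i) : Summable f ∧ ∑' i, f i ≤ M * ∑' i, w i := by
  have hMw : Summable (fun i => M * w i) := hw.mul_left M
  have hsum : Summable f := hMw.of_nonneg_of_le hf hfw
  exact ⟨hsum, (hsum.tsum_le_tsum hfw hMw).trans_eq tsum_mul_left⟩

lemma norm_mul_norm_le_of_norm_lt {N : ℕ} {m c D C : ℝ} {j k : ℕ}
    {Γ Γ' : Set (EuclideanSpace ℝ (Fin N))} {F : (Fin N → ℤ) → (Fin N → ℤ) → ℂ}
    {g : (Fin N → ℤ) → ℂ} (hc0 : 0 ≤ c) (hc1 : c < 1)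
    (hcone : ∀ ξ ∈ Γ', ∀ η : EuclideanSpace ℝ (Fin N), ‖ξ - η‖ ≤ c * ‖ξ‖ → η ∈ Γ)
    (hD : 0 ≤ D) (hFD : ∀ η ζ, ‖F η ζ‖ ≤ D * ((1 + ‖iZ N η‖) ^ j)⁻¹ * (1 + ‖iZ N ζ‖) ^ m)
    (hC : 0 ≤ C) (hgC : ∀ ζ, iZ N ζ ∈ Γ → ‖g ζ‖ ≤ C * ((1 + ‖iZ N ζ‖) ^ (⌈m⌉₊ + k))⁻¹)
    {ξ η : Fin N → ℤ} (hξ : iZ N ξ ∈ Γ') (hη : ‖iZ N η‖ < c * ‖iZ N ξ‖) :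
    ‖F η (ξ - η)‖ * ‖g (ξ - η)‖ ≤
      D * C * ((1 - c) ^ k)⁻¹ * ((1 + ‖iZ N ξ‖) ^ k)⁻¹ * ((1 + ‖iZ N η‖) ^ j)⁻¹ := by
  have hζ : iZ N (ξ - η) ∈ Γ := hcone _ hξ _ (by rw [iZ_sub, sub_sub_cancel]; exact hη.le)
  have hBX : (1 - c) * (1 + ‖iZ N ξ‖) ≤ 1 + ‖iZ N (ξ - η)‖ := by
    rw [iZ_sub]; exact one_sub_mul_one_add_norm_le hc0 hη.le
  set A := 1 + ‖iZ N η‖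
  set B := 1 + ‖iZ N (ξ - η)‖
  have hB : 1 ≤ B := le_add_of_nonneg_right (norm_nonneg _)
  have hc : 0 < 1 - c := sub_pos.2 hc1
  calc ‖F η (ξ - η)‖ * ‖g (ξ - η)‖
      ≤ (D * (A ^ j)⁻¹ * B ^ m) * (C * (B ^ (⌈m⌉₊ + k))⁻¹) :=
        mul_le_mul (hFD η _) (hgC _ hζ) (norm_nonneg _) (by positivity)
    _ = D * C * (A ^ j)⁻¹ * (B ^ m * (B ^ (⌈m⌉₊ + k))⁻¹) := by ring
    _ ≤ D * C * (A ^ j)⁻¹ * (B ^ k)⁻¹ := by gcongr; exact rpow_mul_inv_pow_ceil_add_le hB m k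
    _ ≤ D * C * (A ^ j)⁻¹ * (((1 - c) * (1 + ‖iZ N ξ‖)) ^ k)⁻¹ := by gcongr
    _ = D * C * ((1 - c) ^ k)⁻¹ * ((1 + ‖iZ N ξ‖) ^ k)⁻¹ * (A ^ j)⁻¹ := by
        rw [mul_pow, mul_inv]; ring

theorem stmt_14_general (N : ℕ) (m : ℝ) (c : ℝ) (hc0 : 0 < c) (hc1 : c < 1)
    (Γ Γ' : Set (EuclideanSpace ℝ (Fin N)))
    (hcone : ∀ ξ ∈ Γ', ∀ η : EuclideanSpace ℝ (Fin N), ‖ξ - η‖ ≤ c * ‖ξ‖ → η ∈ Γ)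
    (F : (Fin N → ℤ) → (Fin N → ℤ) → ℂ) (hF : SymbolBounds N m F)
    (g : (Fin N → ℤ) → ℂ) (hg : RapidlyDecreasingOn N g Γ) :
    ∀ k : ℕ, ∃ C' > (0 : ℝ), ∀ ξ : Fin N → ℤ, iZ N ξ ∈ Γ' →
      Summable (fun η : Fin N → ℤ =>
        if ‖iZ N η‖ < c * ‖iZ N ξ‖ then
          ‖F η (ξ - η)‖ * ‖g (ξ - η)‖ else 0) ∧
      (∑' η : Fin N → ℤ,
        if ‖iZ N η‖ < c * ‖iZ N ξ‖ then
          ‖F η (ξ - η)‖ * ‖g (ξ - η)‖ else 0)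
        ≤ C' * ((1 + ‖iZ N ξ‖) ^ k)⁻¹ := by
  intro k
  obtain ⟨D, hD, hFD⟩ := hF (2 * N)
  obtain ⟨C, hC, hgC⟩ := hg (⌈m⌉₊ + k)
  have hw := summable_inv_one_add_norm_iZ_pow N
  have hS : 0 < ∑' η, ((1 + ‖iZ N η‖) ^ (2 * N))⁻¹ :=
    hw.tsum_pos (fun _ => by positivity) 0 (by positivity)
  have hc : 0 < 1 - c := sub_pos.2 hc1
  refine ⟨D * C * ((1 - c) ^ k)⁻¹ * ∑' η, ((1 + ‖iZ N η‖) ^ (2 * N))⁻¹, by positivity,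
    fun ξ hξ => ?_⟩
  refine (summable_and_tsum_le_of_le_mul
    (M := D * C * ((1 - c) ^ k)⁻¹ * ((1 + ‖iZ N ξ‖) ^ k)⁻¹) (fun η => ?_) hw fun η => ?_).imp_right
    fun h => h.trans_eq (by ring)
  · dsimp only
    split_ifs <;> positivity
  · split_ifs with hη
    · exact norm_mul_norm_le_of_norm_lt hc0.le hc1 hcone hD.le hFD hC.le hgC hξ hη
    · positivity

theorem stmt_14 (N : ℕ) (hN : 1 ≤ N) (m : ℝ) (c : ℝ) (hc0 : 0 < c) (hc1 : c < 1)
    (Γ Γ' : Set (EuclideanSpace ℝ (Fin N)))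
    (hΓ : IsOpenCone N Γ) (hΓ' : IsOpenCone N Γ')
    (hcone : ∀ ξ ∈ Γ', ∀ η : EuclideanSpace ℝ (Fin N), ‖ξ - η‖ ≤ c * ‖ξ‖ → η ∈ Γ)
    (F : (Fin N → ℤ) → (Fin N → ℤ) → ℂ) (hF : SymbolBounds N m F)
    (g : (Fin N → ℤ) → ℂ) (hg : RapidlyDecreasingOn N g Γ) :
    ∀ k : ℕ, ∃ C' > (0 : ℝ), ∀ ξ : Fin N → ℤ, iZ N ξ ∈ Γ' →
      Summable (fun η : Fin N → ℤ =>
        if ‖iZ N η‖ < c * ‖iZ N ξ‖ then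
          ‖F η (ξ - η)‖ * ‖g (ξ - η)‖ else 0) ∧
      (∑' η : Fin N → ℤ,
        if ‖iZ N η‖ < c * ‖iZ N ξ‖ then
          ‖F η (ξ - η)‖ * ‖g (ξ - η)‖ else 0)
        ≤ C' * ((1 + ‖iZ N ξ‖) ^ k)⁻¹ :=
  stmt_14_general N m c hc0 hc1 Γ Γ' hcone F hF g hg
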